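/- Let G be a class of functions, g⁰ ∈ G, and for a functional R : G → ℝ (empirical risk) and a 'risk' Q : G → [0,∞) with Q(g⁰)=0, suppose ĝ minimizes R over G. Define ŝ = √(Q(ĝ)) and, for s ≥ 0, Ê(s) = sup{R(g⁰) - R(g) + Q(g) : g ∈ G, Q(g) ≤ s²} (with the identification R(g) - R(g⁰) = Q(g) - [(P_n-P)(f⁰ - f_g)]). Then ŝ minimizes s ↦ s² - Ê(s) over s ≥ 0. Concretely: if for all g ∈ G, P_n(f_g) - P_n(f⁰) = P(f_g - f⁰) - (P_n - P)(f⁰ - f_g), and ĝ minimizes P_n(f_g), then ŝ := √(P(f_{ĝ} - f⁰)) satisfies ŝ ∈ argmin_{s≥0} { s² - max_{f ∈ F_s} (P_n - P)(f⁰ - f) }, where F_s = {f ∈ F : P(f - f⁰) ≤ s²}. -/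

import Mathlib

/-! Minimality of `ĝ` bounds every local supremum: `sup {N g : Exc g ≤ s²} ≤ s² - (Exc ĝ - N ĝ)`,
while `ĝ` lies in its own sublevel set, so the supremum at `ŝ` is at least `N ĝ`. Hence the
objective at `ŝ` is at most `Exc ĝ - N ĝ`, which is below its value at any `s`. -/

section SublevelSupremum

variable {ι : Type*} (G : Set ι) (Exc N : ι → ℝ)

theorem le_csSup_image_sublevel {g : ι} (hg : g ∈ G)
    (hbdd : BddAbove (N '' {x ∈ G | Exc x ≤ Exc g})) :
    N g ≤ sSup (N '' {x ∈ G | Exc x ≤ Exc g}) :=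
  le_csSup hbdd ⟨g, ⟨hg, le_rfl⟩, rfl⟩

theorem csSup_image_sublevel_le_sub {c t : ℝ} (hne : {x ∈ G | Exc x ≤ t}.Nonempty)
    (hc : ∀ g ∈ G, c ≤ Exc g - N g) :
    sSup (N '' {x ∈ G | Exc x ≤ t}) ≤ t - c :=
  csSup_le (hne.image N) <| by
    rintro _ ⟨g, ⟨hgG, hgt⟩, rfl⟩
    linarith [hc g hgG]

end SublevelSupremum

theorem stmt6_general {ι : Type*} (G : Set ι) (Exc N : ι → ℝ)
    (hExc : ∀ g ∈ G, 0 ≤ Exc g)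
    (g0 : ι) (hg0 : g0 ∈ G) (hExc0 : Exc g0 = 0)
    (ghat : ι) (hghat : ghat ∈ G)
    (hmin : ∀ g ∈ G, Exc ghat - N ghat ≤ Exc g - N g)
    (hbdd : ∀ s : ℝ, BddAbove (N '' {g ∈ G | Exc g ≤ s ^ 2})) :
    ∀ s : ℝ, 0 ≤ s →
      (Real.sqrt (Exc ghat)) ^ 2
          - sSup (N '' {g ∈ G | Exc g ≤ (Real.sqrt (Exc ghat)) ^ 2})
        ≤ s ^ 2 - sSup (N '' {g ∈ G | Exc g ≤ s ^ 2}) := by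
  intro s _
  have hsq : Real.sqrt (Exc ghat) ^ 2 = Exc ghat := Real.sq_sqrt (hExc ghat hghat)
  rw [hsq]
  have hsup_hat : N ghat ≤ sSup (N '' {g ∈ G | Exc g ≤ Exc ghat}) :=
    le_csSup_image_sublevel G Exc N hghat (hsq ▸ hbdd (Real.sqrt (Exc ghat)))
  have hsup_s : sSup (N '' {g ∈ G | Exc g ≤ s ^ 2}) ≤ s ^ 2 - (Exc ghat - N ghat) :=
    csSup_image_sublevel_le_sub G Exc N ⟨g0, hg0, hExc0 ▸ sq_nonneg s⟩ hmin
  linarith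

/-- Representation formula for the excess risk: if `Exc g = P(f_g - f⁰) ≥ 0` on
`G`, `N g = (P_n - P)(f⁰ - f_g)`, so that the empirical risk of `g` equals
`Exc g - N g` up to an additive constant, and `ĝ ∈ G` minimizes the empirical
risk, then `ŝ = √(Exc ĝ)` minimizes `s ↦ s² - sup{N g : g ∈ G, Exc g ≤ s²}`
over `s ≥ 0`. -/
theorem stmt6 {ι : Type*} (G : Set ι) (Exc N : ι → ℝ)
    (hExc : ∀ g ∈ G, 0 ≤ Exc g)
    (g0 : ι) (hg0 : g0 ∈ G) (hExc0 : Exc g0 = 0) (hN0 : N g0 = 0)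
    (ghat : ι) (hghat : ghat ∈ G)
    (hmin : ∀ g ∈ G, Exc ghat - N ghat ≤ Exc g - N g)
    (hbdd : ∀ s : ℝ, BddAbove (N '' {g ∈ G | Exc g ≤ s ^ 2})) :
    ∀ s : ℝ, 0 ≤ s →
      (Real.sqrt (Exc ghat)) ^ 2
          - sSup (N '' {g ∈ G | Exc g ≤ (Real.sqrt (Exc ghat)) ^ 2})
        ≤ s ^ 2 - sSup (N '' {g ∈ G | Exc g ≤ s ^ 2}) :=
  stmt6_general G Exc N hExc g0 hg0 hExc0 ghat hghat hmin hbdd
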